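/- Let k be an even positive integer, c = (c₁, c₂) ∈ ℂ², and let w ∈ ℂ with w ≠ 0 and w² ≠ 1; fix r₁, r₂ ∈ ℂ with r₁² = 1 + w, r₂² = 1 − w and set A₁ := 1/(2r₁) + 1/(2·i·r₂), A₂ := 1/(2r₁) − 1/(2·i·r₂). Let α, β, γ, η ∈ ℂ satisfy α ≠ 0, exp(2η) = 1, αᵏ = −2·exp(η) and exp(αc₁ + βc₂) = −1, and let Φ₁ : ℂ → ℂ satisfy Φ₁(t + c₂) = Φ₁(t) for all t ∈ ℂ. Set ψ(z₁, z₂) := αz₁ + βz₂ + Φ₁(z₂) + γ, and define f(z₁, z₂) := (A₁·exp(ψ(z)) + A₂·exp(−ψ(z)))/(√2·αᵏ) and g(z₁, z₂) := (A₁·exp(−ψ(z) + η) + A₂·exp(ψ(z) − η))/(√2·αᵏ). Then for all z = (z₁, z₂) ∈ ℂ²: (∂ᵏf/∂z₁ᵏ)(z)² + 2w·(∂ᵏf/∂z₁ᵏ)(z)·(g(z₁ + c₁, z₂ + c₂) − g(z)) + (g(z₁ + c₁, z₂ + c₂) − g(z))² = 1 and (∂ᵏg/∂z₁ᵏ)(z)²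 + 2w·(∂ᵏg/∂z₁ᵏ)(z)·(f(z₁ + c₁, z₂ + c₂) − f(z)) + (f(z₁ + c₁, z₂ + c₂) − f(z))² = 1. -/

import Mathlib

/-!
Since `k` is even, `∂ᵏ/∂z₁ᵏ` multiplies both `f` and `g` by `αᵏ = -2 e^η`, and
`exp (α c₁ + β c₂) = -1` makes `f` and `g` change sign under the shift by `c`, so the
differences are `-2 f` and `-2 g`. Using `e^{2η} = 1`, both equations become
`u² + 2wuv + v² = 1` for `u = (A₁ x + A₂ y)/√2`, `v = (A₁ y + A₂ x)/√2`, where `x y = 1`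
(`x = e^ψ` in the first equation, `x = e^{η-ψ}` in the second). This holds because
`u ± v = (A₁ ± A₂)(x ± y)` while `(A₁ + A₂)² (1 + w) = 1` and `(A₁ - A₂)² (1 - w) = -1`,
so `2 (u² + 2wuv + v²) = (x + y)² - (x - y)² = 4 x y`.
-/

open Complex

theorem iteratedDeriv_cexp_mul_add (n : ℕ) (a b z : ℂ) :
    iteratedDeriv n (fun t => exp (a * t + b)) z = a ^ n * exp (a * z + b) := by
  simp only [exp_add, mul_comm _ (exp b), iteratedDeriv_const_mul_field,
    iteratedDeriv_cexp_const_mul]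
  ring

theorem iteratedDeriv_eq_pow_mul_of_even {k : ℕ} (hk : Even k) {h : ℂ → ℂ} {a b b' P Q : ℂ}
    (hh : ∀ t, h t = P * exp (a * t + b) + Q * exp (-a * t + b')) (z : ℂ) :
    iteratedDeriv k h z = a ^ k * h z := by
  rw [funext hh, iteratedDeriv_fun_add (by fun_prop) (by fun_prop),
    iteratedDeriv_const_mul_field, iteratedDeriv_const_mul_field, iteratedDeriv_cexp_mul_add,
    iteratedDeriv_cexp_mul_add, hk.neg_pow]
  ring

theorem sq_add_mul_one_add_eq_one {w r₁ r₂ A₁ A₂ : ℂ} (hw : 1 + w ≠ 0)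
    (hr₁ : r₁ ^ 2 = 1 + w) (hA₁ : A₁ = 1 / (2 * r₁) + 1 / (2 * I * r₂))
    (hA₂ : A₂ = 1 / (2 * r₁) - 1 / (2 * I * r₂)) :
    (A₁ + A₂) ^ 2 * (1 + w) = 1 := by
  have hr₁0 : r₁ ≠ 0 := by rintro rfl; exact hw (by rw [← hr₁]; ring)
  rw [← hr₁, hA₁, hA₂]
  field_simp
  ring

theorem sq_sub_mul_one_sub_eq_neg_one {w r₁ r₂ A₁ A₂ : ℂ} (hw : 1 - w ≠ 0)
    (hr₂ : r₂ ^ 2 = 1 - w) (hA₁ : A₁ = 1 / (2 * r₁) + 1 / (2 * I * r₂))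
    (hA₂ : A₂ = 1 / (2 * r₁) - 1 / (2 * I * r₂)) :
    (A₁ - A₂) ^ 2 * (1 - w) = -1 := by
  have hr₂0 : r₂ ≠ 0 := by rintro rfl; exact hw (by rw [← hr₂]; ring)
  rw [← hr₂, hA₁, hA₂]
  field_simp
  ring_nf
  simp

theorem trinomial_eq_two_mul {w A₁ A₂ : ℂ} (hsum : (A₁ + A₂) ^ 2 * (1 + w) = 1)
    (hdiff : (A₁ - A₂) ^ 2 * (1 - w) = -1) (X Y : ℂ) :
    (A₁ * X + A₂ * Y) ^ 2 + 2 * w * (A₁ * X + A₂ * Y) * (A₁ * Y + A₂ * X)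
      + (A₁ * Y + A₂ * X) ^ 2 = 2 * X * Y := by
  linear_combination (X + Y) ^ 2 / 2 * hsum + (X - Y) ^ 2 / 2 * hdiff

theorem trinomial_div_sqrt_two_eq_one {w A₁ A₂ : ℂ} (hsum : (A₁ + A₂) ^ 2 * (1 + w) = 1)
    (hdiff : (A₁ - A₂) ^ 2 * (1 - w) = -1) {X Y : ℂ} (hXY : X * Y = 1) :
    ((A₁ * X + A₂ * Y) / √2) ^ 2
      + 2 * w * ((A₁ * X + A₂ * Y) / √2) * ((A₁ * Y + A₂ * X) / √2)
      + ((A₁ * Y + A₂ * X) / √2) ^ 2 = 1 := by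
  have hs : ((√2 : ℝ) : ℂ) ^ 2 = 2 := by norm_cast; simp
  field_simp
  linear_combination trinomial_eq_two_mul hsum hdiff X Y + 2 * hXY - hs

theorem trinomial_system_of_closed_forms {w A₁ A₂ e X F₀ F₁ G₀ G₁ : ℂ}
    (hsum : (A₁ + A₂) ^ 2 * (1 + w) = 1) (hdiff : (A₁ - A₂) ^ 2 * (1 - w) = -1)
    (he : e * e = 1) (hX : X ≠ 0)
    (hF₀ : F₀ = (A₁ * X + A₂ * X⁻¹) / (√2 * (-2 * e)))
    (hF₁ : F₁ = (A₁ * -X + A₂ * (-X)⁻¹) / (√2 * (-2 * e)))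
    (hG₀ : G₀ = (A₁ * (X⁻¹ * e) + A₂ * (X / e)) / (√2 * (-2 * e)))
    (hG₁ : G₁ = (A₁ * ((-X)⁻¹ * e) + A₂ * (-X / e)) / (√2 * (-2 * e))) :
    (-2 * e * F₀) ^ 2 + 2 * w * (-2 * e * F₀) * (G₁ - G₀) + (G₁ - G₀) ^ 2 = 1 ∧
      (-2 * e * G₀) ^ 2 + 2 * w * (-2 * e * G₀) * (F₁ - F₀) + (F₁ - F₀) ^ 2 = 1 := by
  have he0 : e ≠ 0 := left_ne_zero_of_mul_eq_one he
  have hF : -2 * e * F₀ = (A₁ * X + A₂ * X⁻¹) / √2 := by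
    rw [hF₀]; field_simp
  have hΔG : G₁ - G₀ = (A₁ * X⁻¹ + A₂ * X) / √2 := by
    rw [hG₀, hG₁]; field_simp; linear_combination -2 * X ^ 2 * A₂ * he
  have hG : -2 * e * G₀ = (A₁ * (e * X⁻¹) + A₂ * (e * X)) / √2 := by
    rw [hG₀]; field_simp; linear_combination -X ^ 2 * A₂ * he
  have hΔF : F₁ - F₀ = (A₁ * (e * X) + A₂ * (e * X⁻¹)) / √2 := by
    rw [hF₀, hF₁]; field_simp; linear_combination -2 * (A₁ * X ^ 2 + A₂) * he
  rw [hF, hG, hΔF, hΔG]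
  exact ⟨trinomial_div_sqrt_two_eq_one hsum hdiff (mul_inv_cancel₀ hX),
    trinomial_div_sqrt_two_eq_one hsum hdiff (by field_simp; linear_combination he)⟩

theorem stmt_14_general (k : ℕ) (hke : Even k) (c₁ c₂ : ℂ) (w r₁ r₂ A₁ A₂ : ℂ)
    (hw2 : w ^ 2 ≠ 1)
    (hr₁ : r₁ ^ 2 = 1 + w) (hr₂ : r₂ ^ 2 = 1 - w)
    (hA₁ : A₁ = 1 / (2 * r₁) + 1 / (2 * Complex.I * r₂))
    (hA₂ : A₂ = 1 / (2 * r₁) - 1 / (2 * Complex.I * r₂))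
    (α β γ η : ℂ)
    (hη : Complex.exp (2 * η) = 1)
    (hαk : α ^ k = -2 * Complex.exp η)
    (hLc : Complex.exp (α * c₁ + β * c₂) = -1)
    (Φ₁ : ℂ → ℂ) (hΦ₁ : ∀ t, Φ₁ (t + c₂) = Φ₁ t)
    (ψ : ℂ → ℂ → ℂ) (hψ : ∀ z₁ z₂, ψ z₁ z₂ = α * z₁ + β * z₂ + Φ₁ z₂ + γ)
    (f g : ℂ → ℂ → ℂ)
    (hf : ∀ z₁ z₂, f z₁ z₂ = (A₁ * Complex.exp (ψ z₁ z₂)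
      + A₂ * Complex.exp (-ψ z₁ z₂)) / ((Real.sqrt 2 : ℂ) * α ^ k))
    (hg : ∀ z₁ z₂, g z₁ z₂ = (A₁ * Complex.exp (-ψ z₁ z₂ + η)
      + A₂ * Complex.exp (ψ z₁ z₂ - η)) / ((Real.sqrt 2 : ℂ) * α ^ k)) :
    ∀ z₁ z₂ : ℂ,
      (iteratedDeriv k (fun t => f t z₂) z₁) ^ 2
          + 2 * w * (iteratedDeriv k (fun t => f t z₂) z₁)
            * (g (z₁ + c₁) (z₂ + c₂) - g z₁ z₂)
          + (g (z₁ + c₁) (z₂ + c₂) - g z₁ z₂) ^ 2 = 1 ∧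
      (iteratedDeriv k (fun t => g t z₂) z₁) ^ 2
          + 2 * w * (iteratedDeriv k (fun t => g t z₂) z₁)
            * (f (z₁ + c₁) (z₂ + c₂) - f z₁ z₂)
          + (f (z₁ + c₁) (z₂ + c₂) - f z₁ z₂) ^ 2 = 1 := by
  intro z₁ z₂
  have hsum := sq_add_mul_one_add_eq_one (fun h => hw2 (by linear_combination (w - 1) * h))
    hr₁ hA₁ hA₂
  have hdiff := sq_sub_mul_one_sub_eq_neg_one (fun h => hw2 (by linear_combination (-1 - w) * h))
    hr₂ hA₁ hA₂
  have hψt : ∀ t, ψ t z₂ = α * t + ψ 0 z₂ := fun t => by rw [hψ, hψ]; ring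
  have hfk : iteratedDeriv k (fun t => f t z₂) z₁ = α ^ k * f z₁ z₂ :=
    iteratedDeriv_eq_pow_mul_of_even hke (P := A₁ / (√2 * α ^ k)) (b := ψ 0 z₂)
      (Q := A₂ / (√2 * α ^ k)) (b' := -ψ 0 z₂) (fun t => by rw [hf, hψt]; ring_nf) z₁
  have hgk : iteratedDeriv k (fun t => g t z₂) z₁ = α ^ k * g z₁ z₂ :=
    iteratedDeriv_eq_pow_mul_of_even hke (P := A₂ / (√2 * α ^ k)) (b := ψ 0 z₂ - η)
      (Q := A₁ / (√2 * α ^ k)) (b' := η - ψ 0 z₂) (fun t => by rw [hg, hψt]; ring_nf) z₁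
  have hXc : exp (ψ (z₁ + c₁) (z₂ + c₂)) = -exp (ψ z₁ z₂) := by
    rw [hψ, hψ, hΦ₁, ← mul_neg_one, ← hLc, ← exp_add]; ring_nf
  have hf₀ := hf z₁ z₂
  have hf₁ := hf (z₁ + c₁) (z₂ + c₂)
  have hg₀ := hg z₁ z₂
  have hg₁ := hg (z₁ + c₁) (z₂ + c₂)
  simp only [exp_add, exp_sub, exp_neg, hXc, hαk] at hf₀ hf₁ hg₀ hg₁
  rw [hfk, hgk, hαk]
  exact trinomial_system_of_closed_forms hsum hdiff (by rw [← exp_add, ← two_mul, hη])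
    (exp_ne_zero _) hf₀ hf₁ hg₀ hg₁

theorem stmt_14 (k : ℕ) (hk : 1 ≤ k) (hke : Even k) (c₁ c₂ : ℂ) (w r₁ r₂ A₁ A₂ : ℂ)
    (hw : w ≠ 0) (hw2 : w ^ 2 ≠ 1)
    (hr₁ : r₁ ^ 2 = 1 + w) (hr₂ : r₂ ^ 2 = 1 - w)
    (hA₁ : A₁ = 1 / (2 * r₁) + 1 / (2 * Complex.I * r₂))
    (hA₂ : A₂ = 1 / (2 * r₁) - 1 / (2 * Complex.I * r₂))
    (α β γ η : ℂ) (hα : α ≠ 0)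
    (hη : Complex.exp (2 * η) = 1)
    (hαk : α ^ k = -2 * Complex.exp η)
    (hLc : Complex.exp (α * c₁ + β * c₂) = -1)
    (Φ₁ : ℂ → ℂ) (hΦ₁ : ∀ t, Φ₁ (t + c₂) = Φ₁ t)
    (ψ : ℂ → ℂ → ℂ) (hψ : ∀ z₁ z₂, ψ z₁ z₂ = α * z₁ + β * z₂ + Φ₁ z₂ + γ)
    (f g : ℂ → ℂ → ℂ)
    (hf : ∀ z₁ z₂, f z₁ z₂ = (A₁ * Complex.exp (ψ z₁ z₂)
      + A₂ * Complex.exp (-ψ z₁ z₂)) / ((Real.sqrt 2 : ℂ) * α ^ k))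
    (hg : ∀ z₁ z₂, g z₁ z₂ = (A₁ * Complex.exp (-ψ z₁ z₂ + η)
      + A₂ * Complex.exp (ψ z₁ z₂ - η)) / ((Real.sqrt 2 : ℂ) * α ^ k)) :
    ∀ z₁ z₂ : ℂ,
      (iteratedDeriv k (fun t => f t z₂) z₁) ^ 2
          + 2 * w * (iteratedDeriv k (fun t => f t z₂) z₁)
            * (g (z₁ + c₁) (z₂ + c₂) - g z₁ z₂)
          + (g (z₁ + c₁) (z₂ + c₂) - g z₁ z₂) ^ 2 = 1 ∧
      (iteratedDeriv k (fun t => g t z₂) z₁) ^ 2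
          + 2 * w * (iteratedDeriv k (fun t => g t z₂) z₁)
            * (f (z₁ + c₁) (z₂ + c₂) - f z₁ z₂)
          + (f (z₁ + c₁) (z₂ + c₂) - f z₁ z₂) ^ 2 = 1 :=
  stmt_14_general k hke c₁ c₂ w r₁ r₂ A₁ A₂ hw2 hr₁ hr₂ hA₁ hA₂ α β γ η hη hαk hLc Φ₁ hΦ₁ ψ hψ f g
    hf hg
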